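/- Let P be a poset, let λ ∈ J(P) be a finite order ideal, and let x ∈ max(λ) be a maximal element of λ such that max(λ \ {x}) = max(λ) \ {x}. Then λ is an Atniss win in J(P). -/

import Mathlib

variable {L : Type*} [PartialOrder L]

/-- `ung x` is the set `{⋀({x} ∪ T) : T ⊆ cov x}` of results of Ungar moves applied to `x`. -/
def ung (x : L) : Set L :=
  {y | ∃ T : Set L, (∀ t ∈ T, t ⋖ x) ∧ IsGLB (insert x T) y}

lemma ung_le {x y : L} (h : y ∈ ung x) : y ≤ x := by
  obtain ⟨T, -, hglb⟩ := h
  exact hglb.1 (Set.mem_insert x T)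

attribute [local instance] WellFoundedLT.toWellFoundedRelation

mutual
  /-- `x` is an Atniss win: some element of `ung x \ {x}` is an Eeta win. -/
  def atnissWin [WellFoundedLT L] (x : L) : Prop :=
    ∃ y, ∃ _ : y ∈ ung x ∧ y ≠ x, eetaWin y
  termination_by x
  decreasing_by rename_i h; exact lt_of_le_of_ne (ung_le h.1) h.2

  /-- `x` is an Eeta win: every element of `ung x \ {x}` is an Atniss win. -/
  def eetaWin [WellFoundedLT L] (x : L) : Prop :=
    ∀ y, (y ∈ ung x ∧ y ≠ x) → atnissWin y
  termination_by x
  decreasing_by rename_i h; exact lt_of_le_of_ne (ung_le h.1) h.2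
end


/-- The lattice `J(P)` of finite order ideals of a poset `P`, ordered by inclusion. -/
abbrev FinIdeal (P : Type*) [PartialOrder P] : Type _ :=
  {I : Finset P // ∀ ⦃x⦄, x ∈ I → ∀ ⦃y⦄, y ≤ x → y ∈ I}

/-- The set of maximal elements of a finite subset of a poset. -/
def maxSet {P : Type*} [PartialOrder P] (s : Finset P) : Set P :=
  {x | x ∈ s ∧ ∀ y ∈ s, x ≤ y → x = y}


section Aux

lemma atniss_or_eeta [WellFoundedLT L] (x : L) : atnissWin x ∨ eetaWin x := by
  induction x using WellFoundedLT.induction with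
  | _ x ih =>
    by_cases he : eetaWin x
    · exact Or.inr he
    · left
      rw [eetaWin] at he
      push_neg at he
      obtain ⟨y, hy, hna⟩ := he
      rw [atnissWin]
      refine ⟨y, hy, ?_⟩
      rcases ih y (lt_of_le_of_ne (ung_le hy.1) hy.2) with ha | he'
      · exact absurd ha hna
      · exact he'

variable {P : Type*} [PartialOrder P] [DecidableEq P]

/-- The set of maximal elements of a finite subset of a poset. -/
def maxSet' (s : Finset P) : Set P :=
  {x | x ∈ s ∧ ∀ y ∈ s, x ≤ y → x = y}

lemma ideal_erase (l : FinIdeal P) {m : P} (hm : m ∈ maxSet' l.val) :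
    ∀ ⦃a⦄, a ∈ l.val.erase m → ∀ ⦃y⦄, y ≤ a → y ∈ l.val.erase m := by
  intro a ha y hy
  rcases Finset.mem_erase.1 ha with ⟨hne, hal⟩
  refine Finset.mem_erase.2 ⟨?_, l.2 hal hy⟩
  rintro rfl
  exact hne (hm.2 a hal hy).symm

lemma covby_of_erase {t l : FinIdeal P} {m : P} (hm : m ∈ maxSet' l.val)
    (ht : t.val = l.val.erase m) : t ⋖ l := by
  have hlt : t < l := by
    show t.val ⊂ l.val
    rw [ht]
    exact Finset.erase_ssubset hm.1
  refine ⟨hlt, fun c hc1 hc2 => ?_⟩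
  have h1 : t.val ⊂ c.val := hc1
  have h2 : c.val ⊂ l.val := hc2
  obtain ⟨a, hac, hat⟩ := Finset.exists_of_ssubset h1
  have ham : a = m := by
    by_contra hne
    exact hat (ht ▸ Finset.mem_erase.2 ⟨hne, h2.1 hac⟩)
  have : l.val ⊆ c.val := by
    intro b hb
    by_cases hbm : b = m
    · exact hbm ▸ ham ▸ hac
    · exact h1.1 (ht ▸ Finset.mem_erase.2 ⟨hbm, hb⟩)
  exact h2.2 this

/-- Lemma A: any "erase a set of maximal elements" is in `ung l`. -/
lemma mem_ung_of_filter (l : FinIdeal P) (M : Set P) (hM : M ⊆ maxSet' l.val)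
    (d : FinIdeal P) (hd : ∀ a, a ∈ d.val ↔ a ∈ l.val ∧ a ∉ M) : d ∈ ung l := by
  refine ⟨{t : FinIdeal P | ∃ m ∈ M, t.val = l.val.erase m}, ?_, ?_, ?_⟩
  · rintro t ⟨m, hmM, ht⟩
    exact covby_of_erase (hM hmM) ht
  · rintro t (rfl | ⟨m, hmM, ht⟩)
    · intro a ha; exact ((hd a).1 ha).1
    · intro a ha
      rcases (hd a).1 ha with ⟨hal, haM⟩
      show a ∈ t.val
      rw [ht]
      exact Finset.mem_erase.2 ⟨fun e => haM (e ▸ hmM), hal⟩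
  · intro z hz
    intro a haz
    refine (hd a).2 ⟨hz (Set.mem_insert _ _) haz, fun haM => ?_⟩
    have : z ≤ (⟨l.val.erase a, ideal_erase l (hM haM)⟩ : FinIdeal P) :=
      hz (Set.mem_insert_of_mem _ ⟨a, haM, rfl⟩)
    exact (Finset.mem_erase.1 (this haz)).1 rfl

/-- Lemma B: covers from below are erasures of maximal elements. -/
lemma exists_of_covby {t l : FinIdeal P} (h : t ⋖ l) :
    ∃ m ∈ maxSet' l.val, t.val = l.val.erase m := by
  have hss : t.val ⊂ l.val := h.1
  have hne : (l.val \ t.val).Nonempty := by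
    obtain ⟨a, ha1, ha2⟩ := Finset.exists_of_ssubset hss
    exact ⟨a, Finset.mem_sdiff.2 ⟨ha1, ha2⟩⟩
  obtain ⟨m, hm, hmin⟩ : ∃ m ∈ l.val \ t.val, ∀ y ∈ l.val \ t.val, ¬ y < m := by
    obtain ⟨m, hm⟩ := Finset.exists_minimal hne
    exact ⟨m, hm.1, fun y hy (hlt : y < m) => not_le_of_gt hlt (hm.2 hy (le_of_lt hlt))⟩
  rcases Finset.mem_sdiff.1 hm with ⟨hml, hmt⟩
  have hu : ∀ ⦃a⦄, a ∈ insert m t.val → ∀ ⦃y⦄, y ≤ a → y ∈ insert m t.val := by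
    intro a ha y hy
    rcases Finset.mem_insert.1 ha with rfl | hat
    · by_cases hyt : y ∈ t.val
      · exact Finset.mem_insert_of_mem hyt
      · have hyD : y ∈ l.val \ t.val := Finset.mem_sdiff.2 ⟨l.2 hml hy, hyt⟩
        have : ¬ y < a := hmin y hyD
        have : y = a := (lt_or_eq_of_le hy).resolve_left this
        exact this ▸ Finset.mem_insert_self _ _
    · exact Finset.mem_insert_of_mem (t.2 hat hy)
  set u : FinIdeal P := ⟨insert m t.val, hu⟩ with hudef
  have htu : t < u := by
    show t.val ⊂ u.val
    exact Finset.ssubset_insert hmt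
  have hul : u ≤ l := by
    intro a ha
    rcases Finset.mem_insert.1 ha with rfl | hat
    · exact hml
    · exact hss.1 hat
  have hueq : u.val = l.val := by
    have goal : u = l := ?_
    · exact congrArg Subtype.val goal
    by_contra hne'
    exact h.2 htu (lt_of_le_of_ne hul hne')
  refine ⟨m, ⟨hml, ?_⟩, ?_⟩
  · intro y hyl hmy
    by_contra hne'
    have hyt : y ∈ t.val := by
      rw [← hueq] at hyl
      rcases Finset.mem_insert.1 hyl with rfl | hyt
      · exact absurd rfl hne'
      · exact hyt
    exact hmt (t.2 hyt hmy)
  · rw [← hueq]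
    exact (Finset.erase_insert hmt).symm

/-- Lemma C: elements of `ung μ` delete only maximal elements. -/
lemma ung_spec {ν μ : FinIdeal P} (hν : ν ∈ ung μ) :
    ν ≤ μ ∧ ∀ a ∈ μ.val, a ∉ ν.val → a ∈ maxSet' μ.val := by
  obtain ⟨T, hT, hglb⟩ := hν
  refine ⟨hglb.1 (Set.mem_insert _ _), fun a haμ haν => ?_⟩
  have : ∃ t ∈ T, a ∉ t.val := by
    by_contra hall
    push_neg at hall
    classical
    have hzid : ∀ ⦃b⦄, b ∈ μ.val.filter (· ≤ a) → ∀ ⦃y⦄, y ≤ b → y ∈ μ.val.filter (· ≤ a) := by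
      intro b hb y hy
      rcases Finset.mem_filter.1 hb with ⟨hbμ, hba⟩
      exact Finset.mem_filter.2 ⟨μ.2 hbμ hy, le_trans hy hba⟩
    set z : FinIdeal P := ⟨μ.val.filter (· ≤ a), hzid⟩
    have hzlb : z ∈ lowerBounds (insert μ T) := by
      rintro w (rfl | hwT)
      · exact fun b hb => (Finset.mem_filter.1 hb).1
      · intro b hb
        rcases Finset.mem_filter.1 hb with ⟨hbμ, hba⟩
        exact w.2 (hall w hwT) hba
    have hza : a ∈ z.val := Finset.mem_filter.2 ⟨haμ, le_refl a⟩
    exact haν (hglb.2 hzlb hza)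
  obtain ⟨t, htT, hat⟩ := this
  obtain ⟨m, hm, ht⟩ := exists_of_covby (hT t htT)
  have : a = m := by
    by_contra hne
    exact hat (ht ▸ Finset.mem_erase.2 ⟨hne, haμ⟩)
  exact this ▸ hm

end Aux

/-- If `x` is a maximal element of a finite order ideal `l` of a poset `P` such that
`max(l \ {x}) = max(l) \ {x}`, then `l` is an Atniss win in `J(P)`. -/
theorem atnissWin_of_maxSet_erase {P : Type*} [PartialOrder P] [DecidableEq P]
    (l : FinIdeal P) (x : P) (hx : x ∈ maxSet l.val)
    (h : maxSet (l.val.erase x) = maxSet l.val \ {x}) :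
    atnissWin l := by
  have hmax : maxSet l.val = maxSet' l.val := rfl
  have hmaxe : maxSet (l.val.erase x) = maxSet' (l.val.erase x) := rfl
  rw [hmax] at hx h
  rw [hmaxe] at h
  set lmax := maxSet' l.val
  -- μ = l with x erased
  set μ : FinIdeal P := ⟨l.val.erase x, ideal_erase l hx⟩ with hμdef
  have hμl : μ ∈ ung l := by
    refine mem_ung_of_filter l {x} (by rintro a rfl; exact hx) μ (fun a => ?_)
    simp [hμdef, Finset.mem_erase, and_comm]
  have hμne : μ ≠ l := by
    intro e
    have : x ∈ μ.val := e ▸ hx.1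
    exact (Finset.mem_erase.1 this).1 rfl
  by_cases he : eetaWin μ
  · rw [atnissWin]
    exact ⟨μ, ⟨hμl, hμne⟩, he⟩
  · rw [eetaWin] at he
    push_neg at he
    obtain ⟨ν, ⟨hνμ, hνne⟩, hna⟩ := he
    have heν : eetaWin ν := (atniss_or_eeta ν).resolve_left hna
    obtain ⟨hle, hdel⟩ := ung_spec hνμ
    have hνl : ν ∈ ung l := by
      refine mem_ung_of_filter l {a : P | a ∈ l.val ∧ a ∉ ν.val} ?_ ν (fun a => ?_)
      · rintro a ⟨hal, haν⟩
        by_cases hax : a = x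
        · exact hax ▸ hx
        · have haμ : a ∈ μ.val := Finset.mem_erase.2 ⟨hax, hal⟩
          have := hdel a haμ haν
          have := h ▸ this
          exact this.1
      · constructor
        · intro haν
          have haμ : a ∈ μ.val := hle haν
          exact ⟨(Finset.mem_erase.1 haμ).2, fun hh => hh.2 haν⟩
        · rintro ⟨hal, hnn⟩
          by_contra haν
          exact hnn ⟨hal, haν⟩
    have hνnel : ν ≠ l := by
      intro e
      have : x ∈ ν.val := e ▸ hx.1
      exact (Finset.mem_erase.1 (hle this)).1 rfl
    rw [atnissWin]
    exact ⟨ν, ⟨hνl, hνnel⟩, heν⟩
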